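/- arXiv:2510.12905 — 4 statements merged into one kernel-verified Lean document; each statement's English description precedes it below -/
import Mathlib

section
/- Let V be a finite dimensional vector space and T : V⊗V → V⊗V an invertible linear map satisfying the pentagon equation T₁₂T₁₃T₂₃ = T₂₃T₁₂. Then the normalized left partial trace U := (dim V)⁻¹ · tr_l(T) : V → V satisfies the 3-gon equation U ∘ U = U, i.e., U is idempotent. -/
open scoped TensorProduct

variable (k : Type*) [Field k] (V : Type*) [AddCommGroup V] [Module k V]

/-- `F` acting on tensor factors 1,2 of `V ⊗ (V ⊗ V)`. -/
noncomputable def op12 (F : V ⊗[k] V →ₗ[k] V ⊗[k] V) :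
    V ⊗[k] (V ⊗[k] V) →ₗ[k] V ⊗[k] (V ⊗[k] V) :=
  (TensorProduct.assoc k V V V).toLinearMap ∘ₗ LinearMap.rTensor V F ∘ₗ
    (TensorProduct.assoc k V V V).symm.toLinearMap

/-- `F` acting on tensor factors 2,3 of `V ⊗ (V ⊗ V)`. -/
noncomputable def op23 (F : V ⊗[k] V →ₗ[k] V ⊗[k] V) :
    V ⊗[k] (V ⊗[k] V) →ₗ[k] V ⊗[k] (V ⊗[k] V) :=
  LinearMap.lTensor V F

/-- the flip of tensor factors 2,3 of `V ⊗ (V ⊗ V)`. -/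
noncomputable def sw23 : V ⊗[k] (V ⊗[k] V) →ₗ[k] V ⊗[k] (V ⊗[k] V) :=
  LinearMap.lTensor V (TensorProduct.comm k V V).toLinearMap

/-- `F` acting on tensor factors 1,3 of `V ⊗ (V ⊗ V)`. -/
noncomputable def op13 (F : V ⊗[k] V →ₗ[k] V ⊗[k] V) :
    V ⊗[k] (V ⊗[k] V) →ₗ[k] V ⊗[k] (V ⊗[k] V) :=
  sw23 k V ∘ₗ op12 k V F ∘ₗ sw23 k V

/-- The pentagon equation `T₁₂T₁₃T₂₃ = T₂₃T₁₂` on `V ⊗ (V ⊗ V)`. -/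
def PentagonEq (T : V ⊗[k] V →ₗ[k] V ⊗[k] V) : Prop :=
  op12 k V T ∘ₗ op13 k V T ∘ₗ op23 k V T = op23 k V T ∘ₗ op12 k V T

/-- The dual pentagon equation `S₂₃S₁₃S₁₂ = S₁₂S₂₃` on `V ⊗ (V ⊗ V)`. -/
def DualPentagonEq (S : V ⊗[k] V →ₗ[k] V ⊗[k] V) : Prop :=
  op23 k V S ∘ₗ op13 k V S ∘ₗ op12 k V S = op12 k V S ∘ₗ op23 k V S

/-- The left partial trace of `F : V⊗V → V⊗V` with respect to a (finite) basis `b`: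
`⟨e^j, tr_l(F)(e_a)⟩ = Σ_i ⟨e^i ⊗ e^j, F (e_i ⊗ e_a)⟩`. -/
noncomputable def trL {d : ℕ} (b : Module.Basis (Fin d) k V)
    (F : V ⊗[k] V →ₗ[k] V ⊗[k] V) : V →ₗ[k] V :=
  ∑ i : Fin d,
    TensorProduct.lift (LinearMap.lsmul k V ∘ₗ b.coord i) ∘ₗ F ∘ₗ TensorProduct.mk k V V (b i)

/- ### Auxiliary material for the proof -/

namespace PentagonAux

section MatrixCore

variable {k : Type*} [Field k] {ι : Type*} [Fintype ι] [DecidableEq ι]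

/-- matrix model of `op12`. -/
def P12m (A : Matrix (ι×ι) (ι×ι) k) : Matrix (ι×ι×ι) (ι×ι×ι) k :=
  Matrix.of fun X Y => A (X.1, X.2.1) (Y.1, Y.2.1) * (if X.2.2 = Y.2.2 then 1 else 0)

/-- matrix model of `op23`. -/
def P23m (A : Matrix (ι×ι) (ι×ι) k) : Matrix (ι×ι×ι) (ι×ι×ι) k :=
  Matrix.of fun X Y => (if X.1 = Y.1 then 1 else 0) * A X.2 Y.2

/-- matrix model of `op13`. -/
def P13m (A : Matrix (ι×ι) (ι×ι) k) : Matrix (ι×ι×ι) (ι×ι×ι) k :=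
  Matrix.of fun X Y => A (X.1, X.2.2) (Y.1, Y.2.2) * (if X.2.1 = Y.2.1 then 1 else 0)

/-- matrix model of the left partial trace. -/
def trlm (A : Matrix (ι×ι) (ι×ι) k) : Matrix ι ι k :=
  Matrix.of fun w c => ∑ a, A (a,w) (a,c)

set_option linter.unusedSectionVars false

@[simp] lemma P12m_apply (A : Matrix (ι×ι) (ι×ι) k) (X Y) :
    P12m A X Y = A (X.1, X.2.1) (Y.1, Y.2.1) * (if X.2.2 = Y.2.2 then 1 else 0) := rfl
@[simp] lemma P23m_apply (A : Matrix (ι×ι) (ι×ι) k) (X Y) :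
    P23m A X Y = (if X.1 = Y.1 then 1 else 0) * A X.2 Y.2 := rfl
@[simp] lemma P13m_apply (A : Matrix (ι×ι) (ι×ι) k) (X Y) :
    P13m A X Y = A (X.1, X.2.2) (Y.1, Y.2.2) * (if X.2.1 = Y.2.1 then 1 else 0) := rfl
@[simp] lemma trlm_apply (A : Matrix (ι×ι) (ι×ι) k) (w c) :
    trlm A w c = ∑ a, A (a,w) (a,c) := rfl

lemma P12m_mul (A B : Matrix (ι×ι) (ι×ι) k) : P12m A * P12m B = P12m (A * B) := by
  ext ⟨p, q, w⟩ ⟨a, b, c⟩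
  simp [Matrix.mul_apply, Fintype.sum_prod_type, mul_ite, ite_mul, Finset.sum_ite_eq,
    Finset.sum_ite_eq', Finset.mul_sum, Finset.sum_mul, mul_comm, mul_assoc, mul_left_comm]

lemma P12m_one : P12m (1 : Matrix (ι×ι) (ι×ι) k) = 1 := by
  ext ⟨p, q, w⟩ ⟨a, b, c⟩
  by_cases h1 : p = a <;> by_cases h2 : q = b <;> by_cases h3 : w = c <;>
    simp [Matrix.one_apply, Prod.ext_iff, h1, h2, h3]

lemma P13m_mul_P23m (A : Matrix (ι×ι) (ι×ι) k) (X Y : ι×ι×ι) :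
    (P13m A * P23m A) X Y = ∑ z, A (X.1, X.2.2) (Y.1, z) * A (X.2.1, z) Y.2 := by
  obtain ⟨a, b, w⟩ := X; obtain ⟨a', b', c⟩ := Y
  simp [Matrix.mul_apply, Fintype.sum_prod_type, mul_ite, ite_mul, mul_zero, zero_mul,
    mul_one, one_mul, Finset.sum_ite_irrel, Finset.sum_const_zero,
    Finset.sum_ite_eq, Finset.sum_ite_eq']

lemma P23m_mul_P12m (A : Matrix (ι×ι) (ι×ι) k) (X Y : ι×ι×ι) :
    (P23m A * P12m A) X Y = ∑ y', A (X.2.1, X.2.2) (y', Y.2.2) * A (X.1, y') (Y.1, Y.2.1) := by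
  obtain ⟨x, y, z⟩ := X; obtain ⟨a, b, c⟩ := Y
  simp [Matrix.mul_apply, Fintype.sum_prod_type, mul_ite, ite_mul, mul_zero, zero_mul,
    mul_one, one_mul, Finset.sum_ite_irrel, Finset.sum_const_zero,
    Finset.sum_ite_eq, Finset.sum_ite_eq']

lemma P12m_mul_left (B : Matrix (ι×ι) (ι×ι) k) (M : Matrix (ι×ι×ι) (ι×ι×ι) k) (X Y : ι×ι×ι) :
    (P12m B * M) X Y = ∑ x, ∑ y, B (X.1, X.2.1) (x, y) * M (x, (y, X.2.2)) Y := by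
  obtain ⟨a, b, w⟩ := X
  simp [Matrix.mul_apply, Fintype.sum_prod_type, mul_ite, ite_mul, mul_zero, zero_mul,
    mul_one, one_mul, Finset.sum_ite_irrel, Finset.sum_const_zero,
    Finset.sum_ite_eq, Finset.sum_ite_eq']

lemma claim1 (A : Matrix (ι×ι) (ι×ι) k) (w c : ι) :
    ∑ p : ι×ι, (P13m A * P23m A) (p.1,(p.2,w)) (p.1,(p.2,c)) = (trlm A * trlm A) w c := by
  calc ∑ p : ι×ι, (P13m A * P23m A) (p.1,(p.2,w)) (p.1,(p.2,c))
      = ∑ p : ι×ι, ∑ z, A (p.1,w) (p.1,z) * A (p.2,z) (p.2,c) := by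
        simp only [P13m_mul_P23m]
    _ = ∑ z, ∑ p : ι×ι, A (p.1,w) (p.1,z) * A (p.2,z) (p.2,c) := Finset.sum_comm
    _ = (trlm A * trlm A) w c := by
        simp only [Matrix.mul_apply, trlm_apply, Finset.sum_mul, Finset.mul_sum,
          Fintype.sum_prod_type]
        exact Finset.sum_congr rfl fun z _ => Finset.sum_comm

lemma claim2 (A B : Matrix (ι×ι) (ι×ι) k) (hAB : A * B = 1) (w c : ι) :
    ∑ p : ι×ι, (P12m B * (P23m A * P12m A)) (p.1,(p.2,w)) (p.1,(p.2,c))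
      = (Fintype.card ι : k) * trlm A w c := by
  have hp : ∀ a b : ι, (P12m B * (P23m A * P12m A)) (a,(b,w)) (a,(b,c))
      = ∑ q : ι×ι×ι, A (q.2.1,w) (q.2.2,c) * (A (q.1,q.2.2) (a,b) * B (a,b) (q.1,q.2.1)) := by
    intro a b
    rw [P12m_mul_left]
    simp only [P23m_mul_P12m, Fintype.sum_prod_type]
    refine Finset.sum_congr rfl fun x _ => Finset.sum_congr rfl fun y _ => ?_
    rw [Finset.mul_sum]
    exact Finset.sum_congr rfl fun y' _ => by ring
  calc ∑ p : ι×ι, (P12m B * (P23m A * P12m A)) (p.1,(p.2,w)) (p.1,(p.2,c))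
      = ∑ p : ι×ι, ∑ q : ι×ι×ι,
          A (q.2.1,w) (q.2.2,c) * (A (q.1,q.2.2) p * B p (q.1,q.2.1)) := by
        refine Finset.sum_congr rfl fun p _ => ?_
        obtain ⟨a, b⟩ := p
        exact hp a b
    _ = ∑ q : ι×ι×ι, ∑ p : ι×ι,
          A (q.2.1,w) (q.2.2,c) * (A (q.1,q.2.2) p * B p (q.1,q.2.1)) := Finset.sum_comm
    _ = ∑ q : ι×ι×ι, A (q.2.1,w) (q.2.2,c) * ((A * B) (q.1,q.2.2) (q.1,q.2.1)) := by
        refine Finset.sum_congr rfl fun q _ => ?_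
        rw [Matrix.mul_apply, Finset.mul_sum]
    _ = (Fintype.card ι : k) * trlm A w c := by
        rw [hAB]
        simp [Matrix.one_apply, Prod.ext_iff, Fintype.sum_prod_type, mul_ite, mul_one, mul_zero,
          Finset.sum_ite_eq, Finset.sum_ite_eq', Finset.card_univ, Finset.sum_const,
          nsmul_eq_mul, Finset.mul_sum]

lemma core (A B : Matrix (ι×ι) (ι×ι) k) (hAB : A * B = 1)
    (h : P13m A * P23m A = P12m B * (P23m A * P12m A)) :
    trlm A * trlm A = (Fintype.card ι : k) • trlm A := by
  ext w c
  rw [Matrix.smul_apply, smul_eq_mul, ← claim1 A w c, h, claim2 A B hAB w c]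

end MatrixCore

section Transfer

variable {k : Type*} [Field k] {V : Type*} [AddCommGroup V] [Module k V]
variable {d : ℕ} (b : Module.Basis (Fin d) k V)

set_option linter.unusedSectionVars false

local notation "b2" => Module.Basis.tensorProduct b b
local notation "b3" => Module.Basis.tensorProduct b (Module.Basis.tensorProduct b b)

lemma repr_contract (i w : Fin d) (t : V ⊗[k] V) :
    b.repr (TensorProduct.lift (LinearMap.lsmul k V ∘ₗ b.coord i) t) w
      = (b2).repr t (i, w) := by
  induction t with
  | zero => simp
  | tmul x y =>
      simp [Module.Basis.tensorProduct_repr_tmul_apply, smul_eq_mul, mul_comm]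
  | add x y hx hy => simp [hx, hy]

lemma repr_assoc (p q w c : Fin d) (t : V ⊗[k] V) :
    (b3).repr ((TensorProduct.assoc k V V V) (t ⊗ₜ[k] b c)) (p, (q, w))
      = (b2).repr t (p, q) * (if c = w then 1 else 0) := by
  induction t with
  | zero => simp
  | tmul x y =>
      simp [TensorProduct.assoc_tmul, Module.Basis.tensorProduct_repr_tmul_apply, smul_eq_mul,
        Module.Basis.repr_self, Finsupp.single_apply]
  | add x y hx hy =>
      simp only [TensorProduct.add_tmul, map_add, Finsupp.add_apply, hx, hy]
      split_ifs <;> simp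

lemma repr_sw23 (p q w : Fin d) (t : V ⊗[k] (V ⊗[k] V)) :
    (b3).repr (sw23 k V t) (p, (q, w)) = (b3).repr t (p, (w, q)) := by
  induction t with
  | zero => simp
  | tmul x s =>
      have hs : ∀ s : V ⊗[k] V,
          (b2).repr ((TensorProduct.comm k V V) s) (q, w) = (b2).repr s (w, q) := by
        intro s
        induction s with
        | zero => simp
        | tmul y z => simp [Module.Basis.tensorProduct_repr_tmul_apply, smul_eq_mul, mul_comm]
        | add y z hy hz => simp [hy, hz]
      simp [sw23, Module.Basis.tensorProduct_repr_tmul_apply, hs]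
  | add x y hx hy =>
      simp only [map_add, Finsupp.add_apply, hx, hy]

lemma toMatrix_trL (F : V ⊗[k] V →ₗ[k] V ⊗[k] V) :
    LinearMap.toMatrix b b (trL k V b F) = trlm (LinearMap.toMatrix b2 b2 F) := by
  ext w c
  rw [LinearMap.toMatrix_apply]
  simp only [trL, LinearMap.sum_apply, LinearMap.comp_apply, TensorProduct.mk_apply,
    map_sum, Finsupp.coe_finset_sum, Finset.sum_apply, trlm_apply]
  refine Finset.sum_congr rfl fun i _ => ?_
  rw [repr_contract, LinearMap.toMatrix_apply, Module.Basis.tensorProduct_apply]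

lemma toMatrix_op23 (F : V ⊗[k] V →ₗ[k] V ⊗[k] V) :
    LinearMap.toMatrix b3 b3 (op23 k V F) = P23m (LinearMap.toMatrix b2 b2 F) := by
  ext ⟨p, q, w⟩ ⟨a, b', c⟩
  rw [LinearMap.toMatrix_apply, P23m_apply]
  simp only [Module.Basis.tensorProduct_apply, op23, LinearMap.lTensor_tmul,
    Module.Basis.tensorProduct_repr_tmul_apply, Module.Basis.repr_self, Finsupp.single_apply,
    LinearMap.toMatrix_apply, smul_eq_mul]
  by_cases h : a = p <;> simp [h]
  exact fun h' => absurd h'.symm h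

lemma toMatrix_op12 (F : V ⊗[k] V →ₗ[k] V ⊗[k] V) :
    LinearMap.toMatrix b3 b3 (op12 k V F) = P12m (LinearMap.toMatrix b2 b2 F) := by
  ext ⟨p, q, w⟩ ⟨a, b', c⟩
  rw [LinearMap.toMatrix_apply, P12m_apply]
  simp only [Module.Basis.tensorProduct_apply, op12, LinearMap.comp_apply,
    LinearEquiv.coe_coe, TensorProduct.assoc_symm_tmul, LinearMap.rTensor_tmul]
  rw [repr_assoc, LinearMap.toMatrix_apply, Module.Basis.tensorProduct_apply]
  by_cases h : c = w <;> simp [h]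
  exact fun h' => absurd h'.symm h

lemma sw23_basis (a b' c : Fin d) :
    sw23 k V ((b3) (a, (b', c))) = (b3) (a, (c, b')) := by
  simp [Module.Basis.tensorProduct_apply, sw23]

lemma toMatrix_op13 (F : V ⊗[k] V →ₗ[k] V ⊗[k] V) :
    LinearMap.toMatrix b3 b3 (op13 k V F) = P13m (LinearMap.toMatrix b2 b2 F) := by
  ext ⟨p, q, w⟩ ⟨a, b', c⟩
  rw [LinearMap.toMatrix_apply, P13m_apply]
  have : (op13 k V F) ((b3) (a, (b', c))) = sw23 k V ((op12 k V F) ((b3) (a, (c, b')))) := by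
    rw [op13, LinearMap.comp_apply, LinearMap.comp_apply, sw23_basis]
  rw [this, repr_sw23, ← LinearMap.toMatrix_apply, toMatrix_op12, P12m_apply]

end Transfer

end PentagonAux

open PentagonAux in
/-- If `V` is finite dimensional, `dim V ≠ 0` in `k`, and `T` is an invertible solution of the
pentagon equation, then `U := (dim V)⁻¹ • tr_l(T)` is idempotent (the 3-gon equation). -/
theorem normalized_left_partial_trace_of_pentagon_idempotent
    {k : Type*} [Field k] {V : Type*} [AddCommGroup V] [Module k V] [FiniteDimensional k V]
    (hdim : (Module.finrank k V : k) ≠ 0)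
    (T : V ⊗[k] V ≃ₗ[k] V ⊗[k] V)
    (hT : PentagonEq k V T.toLinearMap) :
    ((Module.finrank k V : k)⁻¹ • trL k V (Module.finBasis k V) T.toLinearMap) ∘ₗ
        ((Module.finrank k V : k)⁻¹ • trL k V (Module.finBasis k V) T.toLinearMap) =
      (Module.finrank k V : k)⁻¹ • trL k V (Module.finBasis k V) T.toLinearMap := by
  classical
  set b : Module.Basis (Fin (Module.finrank k V)) k V := Module.finBasis k V with hb
  set A : Matrix _ _ k :=
    LinearMap.toMatrix (b.tensorProduct b) (b.tensorProduct b) T.toLinearMap with hA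
  set B : Matrix _ _ k :=
    LinearMap.toMatrix (b.tensorProduct b) (b.tensorProduct b) T.symm.toLinearMap with hB
  have hid1 : T.toLinearMap ∘ₗ T.symm.toLinearMap = LinearMap.id := by
    ext x; simp
  have hid2 : T.symm.toLinearMap ∘ₗ T.toLinearMap = LinearMap.id := by
    ext x; simp
  have hAB : A * B = 1 := by
    rw [hA, hB, ← LinearMap.toMatrix_comp _ (b.tensorProduct b) _, hid1, LinearMap.toMatrix_id]
  have hBA : B * A = 1 := by
    rw [hA, hB, ← LinearMap.toMatrix_comp _ (b.tensorProduct b) _, hid2, LinearMap.toMatrix_id]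
  have hT' : op12 k V T.toLinearMap ∘ₗ (op13 k V T.toLinearMap ∘ₗ op23 k V T.toLinearMap)
      = op23 k V T.toLinearMap ∘ₗ op12 k V T.toLinearMap := hT
  have hpent : P12m A * (P13m A * P23m A) = P23m A * P12m A := by
    have h3 := congrArg
      (LinearMap.toMatrix (b.tensorProduct (b.tensorProduct b))
        (b.tensorProduct (b.tensorProduct b))) hT'
    rw [LinearMap.toMatrix_comp _ (b.tensorProduct (b.tensorProduct b)) _,
      LinearMap.toMatrix_comp _ (b.tensorProduct (b.tensorProduct b)) _,
      LinearMap.toMatrix_comp _ (b.tensorProduct (b.tensorProduct b)) _,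
      toMatrix_op12, toMatrix_op13, toMatrix_op23] at h3
    exact h3
  have hkey : P13m A * P23m A = P12m B * (P23m A * P12m A) := by
    calc P13m A * P23m A
        = (P12m B * P12m A) * (P13m A * P23m A) := by
          rw [P12m_mul, hBA, P12m_one, one_mul]
      _ = P12m B * (P12m A * (P13m A * P23m A)) := by rw [mul_assoc]
      _ = P12m B * (P23m A * P12m A) := by rw [hpent]
  have hcore : trlm A * trlm A = ((Module.finrank k V : ℕ) : k) • trlm A := by
    have h := core A B hAB hkey
    rwa [Fintype.card_fin] at h
  have htr : trL k V b T.toLinearMap ∘ₗ trL k V b T.toLinearMap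
      = ((Module.finrank k V : k)) • trL k V b T.toLinearMap := by
    apply (LinearMap.toMatrix b b).injective
    rw [LinearMap.toMatrix_comp b b b, map_smul]
    simp only [toMatrix_trL]
    exact hcore
  rw [LinearMap.smul_comp, LinearMap.comp_smul, smul_smul, htr, smul_smul, mul_assoc,
    inv_mul_cancel₀ hdim, mul_one]
end

section
/- Let X be a set and S : X × X → X × X a map satisfying the set-theoretic dual pentagon equation S₂₃S₁₃S₁₂ = S₁₂S₂₃ on X³. Define T : X × X → X × X × X by T(a₁,a₂) := (a₁, S(a₁,a₂)). Then T satisfies the set-theoretic 6-gon equation T₁₂T₁₃T₂₃ = T₃₅T₂₄T₁₂ as maps X³ → X⁶. -/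
variable {X : Type*}

/-- `S` acting on coordinates 1,2 of `X³`. -/
def sq12 (S : X × X → X × X) : X × X × X → X × X × X :=
  fun p => ((S (p.1, p.2.1)).1, (S (p.1, p.2.1)).2, p.2.2)

/-- `S` acting on coordinates 1,3 of `X³`. -/
def sq13 (S : X × X → X × X) : X × X × X → X × X × X :=
  fun p => ((S (p.1, p.2.2)).1, p.2.1, (S (p.1, p.2.2)).2)

/-- `S` acting on coordinates 2,3 of `X³`. -/
def sq23 (S : X × X → X × X) : X × X × X → X × X × X :=
  fun p => (p.1, S (p.2.1, p.2.2))

/-- The set-theoretic pentagon equation `T₁₂T₁₃T₂₃ = T₂₃T₁₂` on `X³`. -/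
def SetPentagon (T : X × X → X × X) : Prop :=
  sq12 T ∘ sq13 T ∘ sq23 T = sq23 T ∘ sq12 T

/-- The set-theoretic dual pentagon equation `S₂₃S₁₃S₁₂ = S₁₂S₂₃` on `X³`. -/
def SetDualPentagon (S : X × X → X × X) : Prop :=
  sq23 S ∘ sq13 S ∘ sq12 S = sq12 S ∘ sq23 S

/-- `T : X² → X³` applied at coordinates 2,3 of `X³`, outputs at positions 2,3,4. -/
def t23 (T : X × X → X × X × X) : X × X × X → X × X × X × X :=
  fun p => (p.1, T (p.2.1, p.2.2))

/-- `T : X² → X³` applied at coordinates 1,3 of `X⁴`, outputs at positions 1,3,4. -/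
def t13 (T : X × X → X × X × X) : X × X × X × X → X × X × X × X × X :=
  fun p => ((T (p.1, p.2.2.1)).1, p.2.1, (T (p.1, p.2.2.1)).2.1,
    (T (p.1, p.2.2.1)).2.2, p.2.2.2)

/-- `T : X² → X³` applied at coordinates 1,2 of `X⁵`, outputs at positions 1,2,3. -/
def t12 (T : X × X → X × X × X) : X × X × X × X × X → X × X × X × X × X × X :=
  fun p => ((T (p.1, p.2.1)).1, (T (p.1, p.2.1)).2.1, (T (p.1, p.2.1)).2.2, p.2.2)

/-- `T : X² → X³` applied at coordinates 1,2 of `X³`, outputs at positions 1,2,3. -/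
def t12' (T : X × X → X × X × X) : X × X × X → X × X × X × X :=
  fun p => ((T (p.1, p.2.1)).1, (T (p.1, p.2.1)).2.1, (T (p.1, p.2.1)).2.2, p.2.2)

/-- `T : X² → X³` applied at coordinates 2,4 of `X⁴`, outputs at positions 2,4,5. -/
def t24 (T : X × X → X × X × X) : X × X × X × X → X × X × X × X × X :=
  fun p => (p.1, (T (p.2.1, p.2.2.2)).1, p.2.2.1, (T (p.2.1, p.2.2.2)).2.1,
    (T (p.2.1, p.2.2.2)).2.2)

/-- `T : X² → X³` applied at coordinates 3,5 of `X⁵`, outputs at positions 3,5,6. -/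
def t35 (T : X × X → X × X × X) : X × X × X × X × X → X × X × X × X × X × X :=
  fun p => (p.1, p.2.1, (T (p.2.2.1, p.2.2.2.2)).1, p.2.2.2.1,
    (T (p.2.2.1, p.2.2.2.2)).2.1, (T (p.2.2.1, p.2.2.2.2)).2.2)

/-- The set-theoretic 6-gon equation `T₁₂T₁₃T₂₃ = T₃₅T₂₄T₁₂` for `T : X² → X³`,
as maps `X³ → X⁶`. -/
def SetSixGon (T : X × X → X × X × X) : Prop :=
  t12 T ∘ t13 T ∘ t23 T = t35 T ∘ t24 T ∘ t12' T

/-- If `S` solves the set-theoretic dual pentagon equation, then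
`T(a₁,a₂) := (a₁, S(a₁,a₂))` solves the set-theoretic 6-gon equation. -/
theorem sixGon_of_dualPentagon {X : Type*} (S : X × X → X × X)
    (hS : SetDualPentagon S) :
    SetSixGon (fun a => (a.1, S a)) := by
  funext p
  obtain ⟨a, b, c⟩ := p
  have h := congrFun hS (a, b, c)
  simp only [sq12, sq13, sq23, Function.comp_apply, Prod.mk.injEq, Prod.ext_iff] at h
  simp only [SetSixGon, t12, t13, t23, t12', t24, t35, Function.comp_apply, Prod.mk.injEq]
  obtain ⟨h1, h2, h3⟩ := h
  exact ⟨trivial, trivial, trivial, h1.symm, h2.symm, h3.symm⟩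
end

section
/- Let X be a set, S : X × X → X × X a map satisfying the set-theoretic dual pentagon equation S₂₃S₁₃S₁₂ = S₁₂S₂₃, and u ∈ X. Define T : X × X → X × X × X by T(a₁,a₂) := (u, S(a₁,a₂)). Then T satisfies the set-theoretic 6-gon equation T₁₂T₁₃T₂₃ = T₃₅T₂₄T₁₂ if and only if S(u,u) = (u,u). -/
variable {X : Type*}

/-- If `S` solves the set-theoretic dual pentagon equation and `u ∈ X`, then
`T(a₁,a₂) := (u, S(a₁,a₂))` solves the set-theoretic 6-gon equation iff `S(u,u) = (u,u)`. -/
theorem sixGon_const_iff_fixed {X : Type*} (S : X × X → X × X) (u : X)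
    (hS : SetDualPentagon S) :
    SetSixGon (fun a => (u, S a)) ↔ S (u, u) = (u, u) := by
  constructor
  · intro h
    have h1 := congrFun h (u, u, u)
    simp only [SetSixGon, t12, t13, t23, t12', t24, t35, Function.comp_apply,
      Prod.mk.injEq] at h1
    exact Prod.ext h1.2.1 h1.2.2.1
  · intro h
    funext p
    obtain ⟨x, y, z⟩ := p
    have hp := congrFun hS (x, y, z)
    simp only [SetDualPentagon, sq12, sq13, sq23, Function.comp_apply,
      Prod.mk.injEq] at hp
    simp only [t12, t13, t23, t12', t24, t35, Function.comp_apply, h,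
      Prod.mk.injEq]
    exact ⟨trivial, trivial, trivial, hp.1.symm,
      (congrArg Prod.fst hp.2).symm, (congrArg Prod.snd hp.2).symm⟩
end

section
/- Let X be a set and T : X × X → X × X a map satisfying the set-theoretic pentagon equation T₁₂T₁₃T₂₃ = T₂₃T₁₂. Define T' : X × X → X × X × X by T'(a₁,a₂) := (T(a₁,a₂), a₂). Then T' satisfies the set-theoretic 6-gon equation T'₁₂T'₁₃T'₂₃ = T'₃₅T'₂₄T'₁₂. -/
variable {X : Type*}

/-- If `T` solves the set-theoretic pentagon equation, then
`T'(a₁,a₂) := (T(a₁,a₂), a₂)` solves the set-theoretic 6-gon equation. -/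
theorem sixGon_of_pentagon {X : Type*} (T : X × X → X × X)
    (hT : SetPentagon T) :
    SetSixGon (fun a => ((T a).1, (T a).2, a.2)) := by
  have h := fun p => congrFun hT p
  simp only [SetPentagon, sq12, sq13, sq23, Function.comp_apply] at h
  funext p
  obtain ⟨a, b, c⟩ := p
  have h1 := congrArg Prod.fst (h (a, b, c))
  have h2 := congrArg (fun q => q.2.1) (h (a, b, c))
  have h3 := congrArg (fun q => q.2.2) (h (a, b, c))
  simp only at h1 h2 h3
  simp only [SetSixGon, t12, t13, t23, t12', t24, t35, Function.comp_apply,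
    Prod.mk.injEq]
  exact ⟨h1, h2, trivial, h3, trivial⟩
end
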